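/- arXiv:1811.05744 — 7 statements merged into one kernel-verified Lean document; each statement's English description precedes it below -/
import Mathlib

section
/- Desnanot–Jacobi identity: for any (n+1)×(n+1) matrix M over a commutative ring, det(M)·det(M with first and last row and column removed) = det(M with first row, first column removed)·det(M with last row, last column removed) − det(M with first row, last column removed)·det(M with last row, first column removed). -/
/-!
Reorder the indices so that `0` and `n + 1` come first, writing the matrix as `N` with blocks
indexed by `Fin 2 ⊕ Fin n`. Multiplying `N` on the right by `[[adj(N)₁₁, 0], [adj(N)₂₁, 1]]` gives
`[[det N • 1, N₁₂], [0, N₂₂]]`, so `det N * det adj(N)₁₁ = det N ^ 2 * det N₂₂`. Cancelling `det N`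
is legitimate for the generic matrix over `ℤ[X_ij]`, and the identity then specializes to every
commutative ring (Jacobi's complementary minor theorem). Finally the entries of `adj(N)₁₁` are the
four corner minors of `M`, and their signs cancel in pairs.
-/

open Matrix

namespace Matrix

variable {R m n : Type*} [CommRing R] [Fintype m] [Fintype n] [DecidableEq m] [DecidableEq n]

theorem mul_fromBlocks_toBlocks_adjugate (N : Matrix (m ⊕ n) (m ⊕ n) R) :
    N * fromBlocks N.adjugate.toBlocks₁₁ 0 N.adjugate.toBlocks₂₁ 1 =
      fromBlocks (N.det • 1) N.toBlocks₁₂ 0 N.toBlocks₂₂ := by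
  have h := mul_adjugate N
  set A := N.adjugate
  rw [← fromBlocks_toBlocks N, ← fromBlocks_toBlocks A, fromBlocks_multiply,
    fromBlocks_toBlocks N, ← fromBlocks_one, fromBlocks_smul, smul_zero, fromBlocks_inj] at h
  obtain ⟨h₁₁, -, h₂₁, -⟩ := h
  rw [← fromBlocks_toBlocks N, fromBlocks_multiply, fromBlocks_toBlocks N, h₁₁, h₂₁]
  simp

theorem det_mul_det_toBlocks₁₁_adjugate (N : Matrix (m ⊕ n) (m ⊕ n) R) :
    N.det * N.adjugate.toBlocks₁₁.det = N.det ^ Fintype.card m * N.toBlocks₂₂.det :=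
  calc N.det * N.adjugate.toBlocks₁₁.det
      = (N * fromBlocks N.adjugate.toBlocks₁₁ 0 N.adjugate.toBlocks₂₁ 1).det := by
        rw [det_mul, det_fromBlocks_zero₁₂, det_one, mul_one]
    _ = N.det ^ Fintype.card m * N.toBlocks₂₂.det := by
        rw [mul_fromBlocks_toBlocks_adjugate, det_fromBlocks_zero₂₁, det_smul, det_one, mul_one]

theorem det_toBlocks₁₁_adjugate [Nonempty m] (N : Matrix (m ⊕ n) (m ⊕ n) R) :
    N.adjugate.toBlocks₁₁.det = N.det ^ (Fintype.card m - 1) * N.toBlocks₂₂.det := by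
  let X := mvPolynomialX (m ⊕ n) (m ⊕ n) ℤ
  suffices generic : X.adjugate.toBlocks₁₁.det = X.det ^ (Fintype.card m - 1) * X.toBlocks₂₂.det by
    let φ := MvPolynomial.aeval (R := ℤ) fun p : (m ⊕ n) × (m ⊕ n) => N p.1 p.2
    have hX : φ.mapMatrix X = N := mvPolynomialX_mapMatrix_aeval ℤ N
    have h := congrArg φ generic
    rw [map_mul, map_pow, AlgHom.map_det, AlgHom.map_det, AlgHom.map_det] at h
    rw [← hX, ← AlgHom.map_adjugate]
    exact h
  apply mul_left_cancel₀ (det_mvPolynomialX_ne_zero (m ⊕ n) ℤ)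
  rw [det_mul_det_toBlocks₁₁_adjugate, ← mul_assoc, ← pow_succ',
    Nat.sub_add_cancel Fintype.card_pos]

variable {k : ℕ}

theorem adjugate_fin_succ_apply_self (A : Matrix (Fin (k + 1)) (Fin (k + 1)) R) (i : Fin (k + 1)) :
    A.adjugate i i = (A.submatrix i.succAbove i.succAbove).det := by
  rw [adjugate_fin_succ_eq_det_submatrix, ← two_mul, pow_mul, neg_one_sq, one_pow, one_mul]

theorem adjugate_fin_succ_apply_mul_apply_swap (A : Matrix (Fin (k + 1)) (Fin (k + 1)) R)
    (i j : Fin (k + 1)) :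
    A.adjugate i j * A.adjugate j i =
      (A.submatrix j.succAbove i.succAbove).det * (A.submatrix i.succAbove j.succAbove).det := by
  rw [adjugate_fin_succ_eq_det_submatrix, adjugate_fin_succ_eq_det_submatrix, add_comm (i : ℕ),
    mul_mul_mul_comm, ← mul_pow, neg_one_mul, neg_neg, one_pow, one_mul]

end Matrix

def endpointsSumInterior (n : ℕ) : Fin 2 ⊕ Fin n → Fin (n + 2) :=
  Sum.elim ![0, Fin.last (n + 1)]
    fun i => (Fin.last (n + 1)).succAbove ((0 : Fin (n + 1)).succAbove i)

theorem endpointsSumInterior_injective (n : ℕ) : (endpointsSumInterior n).Injective := by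
  rintro (a | a) (b | b) <;> (try fin_cases a) <;> (try fin_cases b) <;>
    simp [endpointsSumInterior, Fin.ext_iff, Fin.succAbove_last] <;> omega

noncomputable def endpointsSumInteriorEquiv (n : ℕ) : Fin 2 ⊕ Fin n ≃ Fin (n + 2) :=
  .ofBijective (endpointsSumInterior n) <| (Fintype.bijective_iff_injective_and_card _).mpr
    ⟨endpointsSumInterior_injective n, by simp [add_comm]⟩

theorem desnanot_jacobi {R : Type*} [CommRing R] {n : ℕ}
    (M : Matrix (Fin (n + 2)) (Fin (n + 2)) R) :
    M.det *
        (M.submatrix (fun i : Fin n => (Fin.last (n + 1)).succAbove ((0 : Fin (n + 1)).succAbove i))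
          (fun j : Fin n => (Fin.last (n + 1)).succAbove ((0 : Fin (n + 1)).succAbove j))).det =
      (M.submatrix (Fin.succAbove 0) (Fin.succAbove 0)).det *
          (M.submatrix (Fin.succAbove (Fin.last (n + 1))) (Fin.succAbove (Fin.last (n + 1)))).det -
        (M.submatrix (Fin.succAbove 0) (Fin.succAbove (Fin.last (n + 1)))).det *
          (M.submatrix (Fin.succAbove (Fin.last (n + 1))) (Fin.succAbove 0)).det := by
  let e := endpointsSumInteriorEquiv n
  have jacobi := det_toBlocks₁₁_adjugate (M.submatrix e e)
  rw [adjugate_submatrix_equiv_self, det_submatrix_equiv_self, det_fin_two, Fintype.card_fin,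
    pow_one] at jacobi
  change M.adjugate 0 0 * M.adjugate (Fin.last _) (Fin.last _) -
    M.adjugate 0 (Fin.last _) * M.adjugate (Fin.last _) 0 = _ at jacobi
  rw [adjugate_fin_succ_apply_self, adjugate_fin_succ_apply_self,
    adjugate_fin_succ_apply_mul_apply_swap] at jacobi
  exact jacobi.symm.trans (by ring)
end

section
/- Propagation phenomenon: if γ is a k-positive sequence and det([M_γ]^{n₀}_{k-1}) = 0 for some n₀ ≥ 0, then det([M_γ]ⁿ_{k-1}) = 0 for all n ≥ 1. -/
open Matrix

private lemma dot_snoc {m : ℕ} (A : Matrix (Fin (m+1)) (Fin (m+1)) ℝ) (v : Fin m → ℝ) :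
    Fin.snoc v 0 ⬝ᵥ A *ᵥ Fin.snoc v 0
      = v ⬝ᵥ (A.submatrix Fin.castSucc Fin.castSucc) *ᵥ v := by
  simp [dotProduct, mulVec, Fin.sum_univ_castSucc]

private lemma dot_cons {m : ℕ} (A : Matrix (Fin (m+1)) (Fin (m+1)) ℝ) (v : Fin m → ℝ) :
    Fin.cons 0 v ⬝ᵥ A *ᵥ Fin.cons 0 v
      = v ⬝ᵥ (A.submatrix Fin.succ Fin.succ) *ᵥ v := by
  simp [dotProduct, mulVec, Fin.sum_univ_succ]

private lemma ker_snoc {m : ℕ} (A : Matrix (Fin (m+1)) (Fin (m+1)) ℝ) (v : Fin m → ℝ)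
    (h : A *ᵥ Fin.snoc v 0 = 0) :
    (A.submatrix Fin.succ Fin.castSucc) *ᵥ v = 0 := by
  funext i
  have h1 := congrFun h i.succ
  simp only [mulVec, dotProduct, Fin.sum_univ_castSucc, Fin.snoc_castSucc, Fin.snoc_last,
    mul_zero, add_zero, Pi.zero_apply] at h1 ⊢
  simpa [Matrix.submatrix_apply] using h1

private lemma ker_cons {m : ℕ} (A : Matrix (Fin (m+1)) (Fin (m+1)) ℝ) (v : Fin m → ℝ)
    (h : A *ᵥ Fin.cons 0 v = 0) :
    (A.submatrix Fin.castSucc Fin.succ) *ᵥ v = 0 := by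
  funext i
  have h1 := congrFun h i.castSucc
  simp only [mulVec, dotProduct, Fin.sum_univ_succ, Fin.cons_zero, Fin.cons_succ,
    mul_zero, zero_add, Pi.zero_apply] at h1 ⊢
  simpa [Matrix.submatrix_apply] using h1

theorem propagation_kpositive (γ : ℕ → ℝ) (k : ℕ)
    (hpos : ∀ n : ℕ, (Matrix.of fun i j : Fin (k + 2) => γ (n + i + j)).PosSemidef)
    (n₀ : ℕ) (h0 : (Matrix.of fun i j : Fin (k + 1) => γ (n₀ + i + j)).det = 0) :
    ∀ n ≥ 1, (Matrix.of fun i j : Fin (k + 1) => γ (n + i + j)).det = 0 := by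
  set B : ℕ → Matrix (Fin (k+1)) (Fin (k+1)) ℝ :=
    fun n => Matrix.of fun i j => γ (n + i + j) with hB
  set A : ℕ → Matrix (Fin (k+2)) (Fin (k+2)) ℝ :=
    fun n => Matrix.of fun i j => γ (n + i + j) with hA
  have hAcc : ∀ n, (A n).submatrix Fin.castSucc Fin.castSucc = B n := by
    intro n; funext i j
    simp only [Matrix.submatrix_apply, hA, hB, Matrix.of_apply, Fin.coe_castSucc]
  have hAsc : ∀ n, (A n).submatrix Fin.succ Fin.castSucc = B (n+1) := by
    intro n; funext i j
    simp only [Matrix.submatrix_apply, hA, hB, Matrix.of_apply, Fin.coe_castSucc, Fin.val_succ]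
    congr 1; omega
  have hAcs : ∀ n, (A n).submatrix Fin.castSucc Fin.succ = B (n+1) := by
    intro n; funext i j
    simp only [Matrix.submatrix_apply, hA, hB, Matrix.of_apply, Fin.coe_castSucc, Fin.val_succ]
    congr 1; omega
  have hAss : ∀ n, (A n).submatrix Fin.succ Fin.succ = B (n+2) := by
    intro n; funext i j
    simp only [Matrix.submatrix_apply, hA, hB, Matrix.of_apply, Fin.val_succ]
    congr 1; omega
  have fwd : ∀ n, (B n).det = 0 → (B (n+1)).det = 0 := by
    intro n hdet
    obtain ⟨v, hv, hker⟩ := Matrix.exists_mulVec_eq_zero_iff.mpr hdet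
    have hAw : A n *ᵥ Fin.snoc v 0 = 0 := by
      apply ((hpos n).dotProduct_mulVec_zero_iff _).mp
      rw [star_trivial, dot_snoc, hAcc, hker, dotProduct_zero]
    refine Matrix.exists_mulVec_eq_zero_iff.mp ⟨v, hv, ?_⟩
    rw [← hAsc]
    exact ker_snoc _ _ hAw
  have bwd : ∀ n, (B (n+2)).det = 0 → (B (n+1)).det = 0 := by
    intro n hdet
    obtain ⟨v, hv, hker⟩ := Matrix.exists_mulVec_eq_zero_iff.mpr hdet
    have hAw : A n *ᵥ Fin.cons 0 v = 0 := by
      apply ((hpos n).dotProduct_mulVec_zero_iff _).mp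
      rw [star_trivial, dot_cons, hAss, hker, dotProduct_zero]
    refine Matrix.exists_mulVec_eq_zero_iff.mp ⟨v, hv, ?_⟩
    rw [← hAcs]
    exact ker_cons _ _ hAw
  have up : ∀ d, (B (n₀ + d)).det = 0 := by
    intro d
    induction d with
    | zero => exact h0
    | succ d ih => exact fwd _ ih
  have down : ∀ d, 1 ≤ n₀ - d → (B (n₀ - d)).det = 0 := by
    intro d
    induction d with
    | zero => intro _; exact h0
    | succ d ih =>
      intro hd
      obtain ⟨m, hm⟩ : ∃ m, n₀ - d = m + 2 := ⟨n₀ - d - 2, by omega⟩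
      have h2 : (B (m+1)).det = 0 := bwd m (by rw [← hm]; exact ih (by omega))
      have he : n₀ - (d+1) = m + 1 := by omega
      rw [he]; exact h2
  intro n hn
  rcases le_or_gt n₀ n with h | h
  · have := up (n - n₀); rwa [Nat.add_sub_cancel' h] at this
  · have := down (n₀ - n) (by omega)
    rwa [show n₀ - (n₀ - n) = n by omega] at this
end

section
/- Let γ be a k-positive sequence such that det([M_γ]^{i}_{k-1}) = 0 and det([M_γ]^{i+2}_{k-1}) ≥ 0 and det([M_γ]^{i}_k), det([M_γ]^{i+2}_{k-2}) ≥ 0. Then det([M_γ]^{i+1}_{k-1}) = 0. -/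
open scoped Matrix

theorem propagation_forward_step (γ : ℕ → ℝ) (k : ℕ)
    (hpos : ∀ n : ℕ, (Matrix.of fun a b : Fin (k + 3) => γ (n + a + b)).PosSemidef) (i : ℕ)
    (h1 : (Matrix.of fun a b : Fin (k + 2) => γ (i + a + b)).det = 0)
    (h2 : 0 ≤ (Matrix.of fun a b : Fin (k + 2) => γ (i + 2 + a + b)).det)
    (h3 : 0 ≤ (Matrix.of fun a b : Fin (k + 3) => γ (i + a + b)).det)
    (h4 : 0 ≤ (Matrix.of fun a b : Fin (k + 1) => γ (i + 2 + a + b)).det) :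
    (Matrix.of fun a b : Fin (k + 2) => γ (i + 1 + a + b)).det = 0 := by
  obtain ⟨v, hv, hMv⟩ := Matrix.exists_mulVec_eq_zero_iff.mpr h1
  have hN := hpos i
  set N : Matrix (Fin (k + 3)) (Fin (k + 3)) ℝ :=
    Matrix.of fun a b : Fin (k + 3) => γ (i + a + b) with hNdef
  -- extend v by zero
  let w : Fin (k + 3) → ℝ := fun j => if h : (j : ℕ) < k + 2 then v ⟨j, h⟩ else 0
  have hw : N *ᵥ w = 0 := by
    rw [← hN.dotProduct_mulVec_zero_iff]
    have hquad : ∀ a : Fin (k + 3), (N *ᵥ w) a =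
        ∑ b : Fin (k + 2), γ (i + a + b) * v b := by
      intro a
      simp only [Matrix.mulVec, dotProduct]
      rw [Fin.sum_univ_castSucc]
      simp only [w, Fin.coe_castSucc, Fin.is_lt, dif_pos, Fin.val_last]
      have : ¬ (k + 2 < k + 2) := lt_irrefl _
      rw [dif_neg this, mul_zero, add_zero]
      exact Finset.sum_congr rfl fun b _ => by rw [hNdef]; rfl
    have hmid : ∀ a : Fin (k + 2), (N *ᵥ w) (Fin.castSucc a) = 0 := by
      intro a
      rw [hquad]
      have := congrFun hMv a
      simpa [Matrix.mulVec, dotProduct] using this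
    simp only [dotProduct]
    apply Finset.sum_eq_zero
    intro j _
    rcases lt_or_ge (j : ℕ) (k + 2) with h | h
    · have : j = Fin.castSucc ⟨j, h⟩ := by ext; rfl
      rw [this, hmid ⟨j, h⟩, mul_zero]
    · have : ¬ ((j : ℕ) < k + 2) := not_lt.mpr h
      simp [w, this]
  -- now read rows 1 .. k+2
  rw [← Matrix.exists_mulVec_eq_zero_iff]
  refine ⟨v, hv, ?_⟩
  funext a
  have := congrFun hw a.succ
  simp only [Matrix.mulVec, dotProduct, Pi.zero_apply] at this ⊢
  rw [show (0 : ℝ) = ∑ b : Fin (k + 2), N a.succ (Fin.castSucc b) * w (Fin.castSucc b) from ?_]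
  · exact Finset.sum_congr rfl fun b _ => by
      have harith : i + (a : ℕ).succ + b = i + 1 + a + b := by omega
      simp only [w, Fin.coe_castSucc, Fin.is_lt, dif_pos]
      show γ (i + 1 + a + b) * v b = N a.succ (Fin.castSucc b) * v ⟨b, b.is_lt⟩
      rw [hNdef]
      show γ (i + 1 + a + b) * v b = γ (i + (a.succ : Fin (k+3)) + (Fin.castSucc b)) * v b
      congr 2
      simp [Fin.val_succ]
      omega
  · rw [← this, Fin.sum_univ_castSucc]
    have : ¬ (k + 2 < k + 2) := lt_irrefl _
    simp only [w, Fin.val_last, dif_neg this, mul_zero, add_zero]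
end

section
/- Let W_α be a subnormal weighted shift with moment sequence γ. Then γ satisfies a finite linear recurrence (is recursively generated) if and only if there exist n₀, k ∈ ℕ such that det((γ_{n₀+i+j})_{0≤i,j≤k}) = 0. -/
/-!
A recurrence `γ (n + r) = ∑ a j * γ (n + j)` is exactly a kernel vector `(a, -1)` of the Hankel
block of size `r + 1`. Conversely, a kernel vector `v` of the block `(γ (n₀ + i + j))_{i,j ≤ k}`,
padded with zeros, is isotropic for each larger block `(γ (n₀ + i + j))_{i,j ≤ k + t}`; as that
block is positive semidefinite, the padded vector lies in its kernel, and row `t` says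
`∑ j, γ (n₀ + t + j) * v j = 0`. Dividing by the last nonzero `v j` gives a recurrence for the
tail `n ↦ γ (n₀ + n)`, which is turned into one for `γ` by prepending zero coefficients.
-/

open Matrix Function
open scoped ComplexOrder

def hankel {R : Type*} (u : ℕ → R) (n k : ℕ) : Matrix (Fin (k + 1)) (Fin (k + 1)) R :=
  Matrix.of fun i j => u (n + i + j)

theorem LinearRecurrence.det_hankel_eq_zero {A : Type*} [CommRing A] [IsDomain A]
    (E : LinearRecurrence A) {u : ℕ → A} (hu : E.IsSolution u) (n : ℕ) :
    (hankel u n E.order).det = 0 := by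
  rw [← exists_mulVec_eq_zero_iff]
  refine ⟨Fin.snoc E.coeffs (-1), fun h => by simpa using congrFun h (Fin.last _), ?_⟩
  funext i
  simp only [mulVec, dotProduct, hankel, of_apply, Fin.sum_univ_castSucc, Fin.snoc_castSucc,
    Fin.snoc_last, Fin.val_castSucc, Fin.val_last, Pi.zero_apply]
  rw [hu (n + i)]
  simp only [mul_comm]
  ring

theorem Matrix.dotProduct_extend_zero {m n R : Type*} [Fintype m] [Fintype n]
    [NonUnitalNonAssocSemiring R] {e : m → n} (he : Injective e) (x : n → R) (v : m → R) :
    x ⬝ᵥ extend e v 0 = (x ∘ e) ⬝ᵥ v :=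
  (Fintype.sum_of_injective e he _ _
    (fun i hi => by rw [extend_apply' _ _ _ hi, Pi.zero_apply, mul_zero])
    (fun j => by rw [Function.comp_apply, he.extend_apply])).symm

theorem Matrix.PosSemidef.mulVec_extend_eq_zero {m n 𝕜 : Type*} [Fintype m] [Fintype n]
    [RCLike 𝕜] {A : Matrix n n 𝕜} (hA : A.PosSemidef) {e : m → n} (he : Injective e)
    {v : m → 𝕜} (hv : A.submatrix e e *ᵥ v = 0) : A *ᵥ extend e v 0 = 0 := by
  have hAe : ∀ j, (A *ᵥ extend e v 0) (e j) = 0 := fun j => by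
    rw [mulVec, dotProduct_extend_zero he]
    exact congrFun hv j
  rw [← hA.dotProduct_mulVec_zero_iff]
  refine Finset.sum_eq_zero fun i _ => ?_
  by_cases hi : ∃ j, e j = i
  · obtain ⟨j, rfl⟩ := hi
    rw [hAe, mul_zero]
  · rw [Pi.star_apply, extend_apply' _ _ _ hi, Pi.zero_apply, star_zero, zero_mul]

theorem hankel_sum_eq_zero_of_mulVec_eq_zero {𝕜 : Type*} [RCLike 𝕜] {γ : ℕ → 𝕜} {n k : ℕ}
    (hpsd : ∀ m, (hankel γ n m).PosSemidef) {v : Fin (k + 1) → 𝕜}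
    (hv : hankel γ n k *ᵥ v = 0) (t : ℕ) : ∑ j : Fin (k + 1), γ (n + t + j) * v j = 0 := by
  have hext := (hpsd (k + t)).mulVec_extend_eq_zero (Fin.castLE_injective (by omega)) hv
  have := congrFun hext ⟨t, by omega⟩
  rwa [mulVec, dotProduct_extend_zero (Fin.castLE_injective _)] at this

section Field

variable {K : Type*} [Field K] {u : ℕ → K}

theorem LinearRecurrence.isSolution_of_sum_eq_zero {k : ℕ} {v : Fin (k + 1) → K}
    (hlast : v (Fin.last k) ≠ 0) (h : ∀ t, ∑ j : Fin (k + 1), u (t + j) * v j = 0) :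
    (⟨k, fun j => -v j.castSucc / v (Fin.last k)⟩ : LinearRecurrence K).IsSolution u := by
  intro t
  have ht := h t
  rw [Fin.sum_univ_castSucc] at ht
  simp only [Fin.val_castSucc, Fin.val_last] at ht
  have hsum : ∑ i : Fin k, -v i.castSucc / v (Fin.last k) * u (t + i)
      = -(∑ i : Fin k, u (t + i) * v i.castSucc) / v (Fin.last k) := by
    rw [neg_div, Finset.sum_div, ← Finset.sum_neg_distrib]
    congr! 1 with i
    ring
  change u (t + k) = ∑ i : Fin k, -v i.castSucc / v (Fin.last k) * u (t + i)
  rw [hsum, eq_div_iff hlast]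
  linear_combination ht

theorem LinearRecurrence.exists_isSolution_of_sum_eq_zero {k : ℕ} {v : Fin (k + 1) → K}
    (hv : v ≠ 0) (h : ∀ t, ∑ j : Fin (k + 1), u (t + j) * v j = 0) :
    ∃ E : LinearRecurrence K, E.IsSolution u := by
  induction k with
  | zero =>
    exact ⟨_, isSolution_of_sum_eq_zero (fun h0 => hv (funext fun j => by
      rwa [Fin.fin_one_eq_zero j])) h⟩
  | succ k ih =>
    by_cases hlast : v (Fin.last _) = 0
    · refine ih (v := Fin.init v) ?_ fun t => ?_
      · contrapose! hv
        rw [← Fin.snoc_init_self v, hv, hlast]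
        ext j
        refine Fin.lastCases ?_ (fun i => ?_) j <;> simp
      · simpa [Fin.sum_univ_castSucc, hlast, Fin.init] using h t
    · exact ⟨_, isSolution_of_sum_eq_zero hlast h⟩

end Field

theorem LinearRecurrence.exists_isSolution_of_isSolution_shift {R : Type*} [CommSemiring R]
    (E : LinearRecurrence R) {u : ℕ → R} {N : ℕ} (h : E.IsSolution fun n => u (N + n)) :
    ∃ E' : LinearRecurrence R, 1 ≤ E'.order ∧ E'.IsSolution u := by
  -- `N + 1` rather than `N` zeros, so that the order is positive even if `E.order = 0`.
  refine ⟨⟨N + 1 + E.order, Fin.append 0 E.coeffs⟩, by dsimp only; omega, fun n => ?_⟩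
  simp only [Fin.sum_univ_add, Fin.append_left, Fin.append_right, Pi.zero_apply, zero_mul,
    Finset.sum_const_zero, zero_add, Fin.val_natAdd]
  calc u (n + (N + 1 + E.order)) = u (N + (n + 1 + E.order)) := by congr 1; omega
    _ = _ := h (n + 1)
    _ = _ := Finset.sum_congr rfl fun i _ => by dsimp only; congr 2; omega

theorem subnormal_recursively_generated_iff_general (γ : ℕ → ℝ)
    (hsub : ∀ k n : ℕ, (Matrix.of fun i j : Fin (k + 1) => γ (n + i + j)).PosSemidef) :
    (∃ r : ℕ, 1 ≤ r ∧ ∃ a : Fin r → ℝ, ∀ n : ℕ,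
        γ (n + r) = ∑ j : Fin r, a j * γ (n + j)) ↔
      ∃ n₀ k : ℕ, (Matrix.of fun i j : Fin (k + 1) => γ (n₀ + i + j)).det = 0 := by
  constructor
  · rintro ⟨r, -, a, ha⟩
    exact ⟨0, r, LinearRecurrence.det_hankel_eq_zero ⟨r, a⟩ ha 0⟩
  · rintro ⟨n₀, k, hdet⟩
    obtain ⟨v, hv0, hv⟩ := exists_mulVec_eq_zero_iff.mpr hdet
    have htail : ∀ t, ∑ j : Fin (k + 1), γ (n₀ + (t + j)) * v j = 0 := fun t => by
      simpa only [add_assoc] using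
        hankel_sum_eq_zero_of_mulVec_eq_zero (fun k => hsub k n₀) hv t
    obtain ⟨E, hE⟩ := LinearRecurrence.exists_isSolution_of_sum_eq_zero
      (u := fun s => γ (n₀ + s)) hv0 htail
    obtain ⟨E', hE'pos, hE'⟩ := E.exists_isSolution_of_isSolution_shift hE
    exact ⟨E'.order, hE'pos, E'.coeffs, hE'⟩

theorem subnormal_recursively_generated_iff (γ : ℕ → ℝ) (α : ℕ → ℝ)
    (hα : ∀ n, 0 < α n) (hγ0 : γ 0 = 1) (hγ : ∀ n, γ (n + 1) = (α n) ^ 2 * γ n)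
    (hsub : ∀ k n : ℕ, (Matrix.of fun i j : Fin (k + 1) => γ (n + i + j)).PosSemidef) :
    (∃ r : ℕ, 1 ≤ r ∧ ∃ a : Fin r → ℝ, ∀ n : ℕ,
        γ (n + r) = ∑ j : Fin r, a j * γ (n + j)) ↔
      ∃ n₀ k : ℕ, (Matrix.of fun i j : Fin (k + 1) => γ (n₀ + i + j)).det = 0 :=
  subnormal_recursively_generated_iff_general γ hsub
end

section
/- Let μ be a positive measure supported in [0,∞) with finite moments s_n. Then μ is a finite combination of Dirac measures (has finite support) if and only if there exist p, k ∈ ℕ such that det((s_{i+j+p})_{0≤i,j≤k}) = 0. -/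
/-!
For `p, k` fixed, the Hankel matrix `H = (s_{i+j+p})_{i,j ≤ k}` is the Gram matrix of
`1, t, …, t^k` for the measure `t^p dμ`: if `v` is the coefficient vector of a polynomial `P` of
degree `≤ k`, then `(H v)_i = ∫ t^(i+p) P(t) dμ` and `v ⬝ H v = ∫ t^p P(t)^2 dμ`.
If `μ` has `m` atoms, `∏ (X - x_l)` vanishes `μ`-a.e., so its coefficient vector lies in the
kernel of `H` for `p = 0`, `k = m`. Conversely, a kernel vector `v ≠ 0` makes the integral of the
function `t^p P(t)^2`, nonnegative on `[0, ∞)`, vanish; hence `μ` is carried by the finitely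
many nonnegative roots of `X^p P^2`.
-/

open MeasureTheory Polynomial Matrix

noncomputable def momentHankel (μ : Measure ℝ) (p k : ℕ) : Matrix (Fin (k + 1)) (Fin (k + 1)) ℝ :=
  Matrix.of fun i j => ∫ t, t ^ ((i : ℕ) + (j : ℕ) + p) ∂μ

section MomentHankel

variable {μ : Measure ℝ}

lemma integrable_pow_mul_sum_pow (hint : ∀ n : ℕ, Integrable (fun t : ℝ => t ^ n) μ)
    {ι : Type*} (s : Finset ι) (n : ℕ) (v : ι → ℝ) (d : ι → ℕ) :
    Integrable (fun t => t ^ n * ∑ j ∈ s, v j * t ^ d j) μ := by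
  simp_rw [Finset.mul_sum, mul_left_comm _ (v _), ← pow_add]
  exact integrable_finsetSum _ fun j _ => (hint _).const_mul _

lemma integrable_eval (hint : ∀ n : ℕ, Integrable (fun t : ℝ => t ^ n) μ) (P : ℝ[X]) :
    Integrable (fun t => P.eval t) μ := by
  simp_rw [eval_eq_sum_range]
  exact integrable_finsetSum _ fun i _ => (hint i).const_mul _

lemma momentHankel_mulVec_apply (hint : ∀ n : ℕ, Integrable (fun t : ℝ => t ^ n) μ)
    (p k : ℕ) (v : Fin (k + 1) → ℝ) (i : Fin (k + 1)) :
    (momentHankel μ p k *ᵥ v) i = ∫ t, t ^ ((i : ℕ) + p) * ∑ j, v j * t ^ (j : ℕ) ∂μ := by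
  simp_rw [mulVec, dotProduct, Finset.mul_sum, mul_left_comm _ (v _), ← pow_add]
  rw [integral_finsetSum _ fun j _ => (hint _).const_mul _]
  refine Finset.sum_congr rfl fun j _ => ?_
  rw [momentHankel, of_apply, integral_const_mul, mul_comm, add_right_comm]

lemma dotProduct_momentHankel_mulVec (hint : ∀ n : ℕ, Integrable (fun t : ℝ => t ^ n) μ)
    (p k : ℕ) (v : Fin (k + 1) → ℝ) :
    v ⬝ᵥ momentHankel μ p k *ᵥ v = ∫ t, t ^ p * (∑ j, v j * t ^ (j : ℕ)) ^ 2 ∂μ := by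
  simp_rw [dotProduct, momentHankel_mulVec_apply hint, ← integral_const_mul]
  rw [← integral_finsetSum _ fun i _ => (integrable_pow_mul_sum_pow hint _ _ _ _).const_mul _]
  congr 1 with t
  rw [sq, Finset.mul_sum, Finset.mul_sum]
  refine Finset.sum_congr rfl fun i _ => ?_
  ring

lemma momentHankel_det_eq_zero_of_ae_isRoot (hint : ∀ n : ℕ, Integrable (fun t : ℝ => t ^ n) μ)
    (p : ℕ) {k : ℕ} {P : ℝ[X]} (hP0 : P ≠ 0) (hPk : P ∈ degreeLT ℝ (k + 1))
    (hroot : ∀ᵐ t ∂μ, P.IsRoot t) : (momentHankel μ p k).det = 0 := by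
  refine exists_mulVec_eq_zero_iff.mp ⟨degreeLTEquiv ℝ (k + 1) ⟨P, hPk⟩, ?_, ?_⟩
  · rwa [Ne, degreeLTEquiv_eq_zero_iff_eq_zero]
  · ext i
    rw [momentHankel_mulVec_apply hint, Pi.zero_apply]
    refine integral_eq_zero_of_ae ?_
    filter_upwards [hroot] with t ht
    rw [← eval_eq_sum_degreeLTEquiv hPk, ht.eq_zero, mul_zero, Pi.zero_apply]

lemma exists_ae_isRoot_of_momentHankel_det_eq_zero
    (hint : ∀ n : ℕ, Integrable (fun t : ℝ => t ^ n) μ) (hpos : ∀ᵐ t ∂μ, 0 ≤ t) {p k : ℕ}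
    (hdet : (momentHankel μ p k).det = 0) : ∃ Q : ℝ[X], Q ≠ 0 ∧ ∀ᵐ t ∂μ, Q.IsRoot t := by
  obtain ⟨v, hv0, hv⟩ := exists_mulVec_eq_zero_iff.mpr hdet
  set P := (degreeLTEquiv ℝ (k + 1)).symm v
  have hP0 : (P : ℝ[X]) ≠ 0 := by
    rwa [Ne, ← degreeLTEquiv_eq_zero_iff_eq_zero P.2, LinearEquiv.apply_symm_apply]
  have hPv : ∀ t, (P : ℝ[X]).eval t = ∑ j, v j * t ^ (j : ℕ) := fun t => by
    rw [eval_eq_sum_degreeLTEquiv P.2, LinearEquiv.apply_symm_apply]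
  have hQ_integral : ∫ t, ((X ^ p * (P : ℝ[X]) ^ 2).eval t) ∂μ = 0 := by
    simp_rw [eval_mul, eval_pow, eval_X, hPv]
    rw [← dotProduct_momentHankel_mulVec hint, hv, dotProduct_zero]
  refine ⟨X ^ p * (P : ℝ[X]) ^ 2, mul_ne_zero (pow_ne_zero _ X_ne_zero) (pow_ne_zero _ hP0), ?_⟩
  have hQ_nonneg : 0 ≤ᵐ[μ] fun t => (X ^ p * (P : ℝ[X]) ^ 2).eval t := by
    filter_upwards [hpos] with t ht
    simp only [eval_mul, eval_pow, eval_X, Pi.zero_apply]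
    positivity
  exact (integral_eq_zero_iff_of_nonneg_ae hQ_nonneg (integrable_eval hint _)).mp hQ_integral

end MomentHankel

lemma ae_isRoot_prod_X_sub_C_sum_dirac {R : Type*} [CommRing R] [MeasurableSpace R]
    [MeasurableSingletonClass R] {ι : Type*} (s : Finset ι) (a : ι → ENNReal) (x : ι → R) :
    ∀ᵐ t ∂(∑ l ∈ s, a l • Measure.dirac (x l)), (∏ l ∈ s, (X - C (x l))).IsRoot t := by
  rw [ae_finsetSum_measure_iff]
  intro l hl
  refine Measure.ae_smul_measure ?_ _
  rw [ae_dirac_eq, Filter.eventually_pure, IsRoot, eval_prod]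
  exact Finset.prod_eq_zero hl (by simp)

lemma exists_fin_sum_dirac_eq_finset_sum {α : Type*} [MeasurableSpace α] (s : Finset α)
    (w : α → ENNReal) (hw : ∀ x ∈ s, w x ≠ ⊤) :
    ∃ (m : ℕ) (a : Fin m → ℝ) (x : Fin m → α), (∀ l, 0 < a l ∧ x l ∈ s) ∧
      ∑ x ∈ s, w x • Measure.dirac x = ∑ l, ENNReal.ofReal (a l) • Measure.dirac (x l) := by
  classical
  set T := s.filter (w · ≠ 0)
  have hT : ∀ y ∈ T, y ∈ s ∧ w y ≠ 0 := fun y hy => Finset.mem_filter.1 hy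
  let e := T.equivFin.symm
  refine ⟨T.card, fun l => (w (e l)).toReal, fun l => e l, fun l =>
    ⟨ENNReal.toReal_pos (hT _ (e l).2).2 (hw _ (hT _ (e l).2).1), (hT _ (e l).2).1⟩, ?_⟩
  calc ∑ x ∈ s, w x • Measure.dirac x
      = ∑ x ∈ T, w x • Measure.dirac x :=
        (Finset.sum_filter_of_ne (p := (w · ≠ 0)) fun x _ h hx => h (by rw [hx, zero_smul])).symm
    _ = ∑ x : T, w x • Measure.dirac (x : α) := (Finset.sum_coe_sort T _).symm
    _ = ∑ l, ENNReal.ofReal (w (e l)).toReal • Measure.dirac (e l : α) := by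
        rw [← e.sum_comp]
        refine Finset.sum_congr rfl fun l _ => ?_
        rw [ENNReal.ofReal_toReal (hw _ (hT _ (e l).2).1)]

theorem finite_mass_iff_hankel_det_zero (μ : Measure ℝ)
    (hsupp : μ (Set.Iio 0) = 0)
    (hint : ∀ n : ℕ, Integrable (fun t : ℝ => t ^ n) μ) :
    (∃ (m : ℕ) (a : Fin m → ℝ) (x : Fin m → ℝ),
        (∀ l, 0 < a l ∧ 0 ≤ x l) ∧
        μ = ∑ l : Fin m, (ENNReal.ofReal (a l)) • Measure.dirac (x l)) ↔
      ∃ p k : ℕ,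
        (Matrix.of fun i j : Fin (k + 1) =>
          ∫ t, t ^ ((i : ℕ) + (j : ℕ) + p) ∂μ).det = 0 := by
  have hpos : ∀ᵐ t ∂μ, 0 ≤ t := by
    filter_upwards [measure_eq_zero_iff_ae_notMem.1 hsupp] with t ht using not_lt.1 ht
  change _ ↔ ∃ p k : ℕ, (momentHankel μ p k).det = 0
  constructor
  · rintro ⟨m, a, x, -, rfl⟩
    refine ⟨0, m, momentHankel_det_eq_zero_of_ae_isRoot hint 0 (monic_prod_X_sub_C x _).ne_zero
      ?_ (ae_isRoot_prod_X_sub_C_sum_dirac _ _ x)⟩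
    rw [mem_degreeLT]
    refine degree_le_natDegree.trans_lt ?_
    rw [natDegree_finsetProd_X_sub_C_eq_card, Finset.card_fin]
    exact_mod_cast m.lt_succ_self
  · rintro ⟨p, k, hdet⟩
    obtain ⟨Q, hQ0, hQ⟩ := exists_ae_isRoot_of_momentHankel_det_eq_zero hint hpos hdet
    have : IsFiniteMeasure μ :=
      (integrable_const_iff.mp (by simpa using hint 0)).resolve_left one_ne_zero
    have hμ : μ = ∑ x ∈ Q.roots.toFinset.filter (0 ≤ ·), μ {x} • Measure.dirac x := by
      refine Measure.ae_mem_finset_iff.mp ?_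
      filter_upwards [hQ, hpos] with t ht h0
      simpa [hQ0, h0] using ht
    obtain ⟨m, a, x, hax, hsum⟩ :=
      exists_fin_sum_dirac_eq_finset_sum _ (fun x => μ {x}) fun x _ => measure_ne_top μ _
    exact ⟨m, a, x, fun l => ⟨(hax l).1, (Finset.mem_filter.1 (hax l).2).2⟩, hμ.trans hsum⟩
end

section
/- Let γ be a strictly positive k-positive sequence and l ≥ 1. Define γ'(t) as the rank-one perturbation: γ'_n = γ_n for n ≤ l, γ'_n = tγ_n for n > l. Then the set I^k := { t ≥ 0 : γ'(t) is k-positive } is a nonempty closed bounded interval containing 1, contained in [γ_l²/(γ_{l−1}γ_{l+1}), γ_l γ_{l+2}/γ_{l+1}²]. -/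
/-!
Write `γ'(t)` for the perturbed sequence. The `k`-positive sequences form a closed convex cone in
`ℕ → ℝ`, and `t ↦ γ'(t)` is affine and continuous, so `I^k` is closed and convex; it contains `1`
because `γ'(1) = γ`. Since `k ≥ 1`, every Hankel block has the principal `2 × 2` minor
`γ'_n γ'_{n+2} - γ'_{n+1}² ≥ 0`; at `n = l - 1` this is `γ_l² ≤ t γ_{l-1} γ_{l+1}`, at `n = l` it is
`t² γ_{l+1}² ≤ t γ_l γ_{l+2}`. These give the two bounds, so `I^k` is also bounded, hence a
compact connected subset of `ℝ`, i.e. a closed interval.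
-/

open Set

namespace Matrix

theorem isClosed_setOf_posSemidef {n : Type*} [Fintype n] :
    IsClosed {M : Matrix n n ℝ | M.PosSemidef} := by
  simp only [posSemidef_iff_dotProduct_mulVec, ofPred_and, ofPred_forall]
  refine IsClosed.inter (isClosed_eq continuous_id.matrix_conjTranspose continuous_id)
    (isClosed_iInter fun x => isClosed_le continuous_const ?_)
  exact continuous_const.dotProduct (continuous_id.matrix_mulVec continuous_const)

theorem convex_setOf_posSemidef {n : Type*} : Convex ℝ {M : Matrix n n ℝ | M.PosSemidef} :=
  fun _ hA _ hB _ _ ha hb _ => (hA.smul ha).add (hB.smul hb)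

open scoped ComplexOrder in
theorem PosSemidef.mul_apply_le_apply_mul_apply {n 𝕜 : Type*} [RCLike 𝕜] {M : Matrix n n 𝕜}
    (hM : M.PosSemidef) (i j : n) : M i j * M j i ≤ M i i * M j j := by
  have := (hM.submatrix ![i, j]).det_nonneg
  rw [det_fin_two] at this
  simpa [sub_nonneg] using this

end Matrix

def hankelBlock (c : ℕ → ℝ) (k n : ℕ) : Matrix (Fin (k + 1)) (Fin (k + 1)) ℝ :=
  Matrix.of fun i j => c (n + i + j)

def KPositive (k : ℕ) (c : ℕ → ℝ) : Prop :=
  ∀ n, (hankelBlock c k n).PosSemidef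

theorem convex_setOf_kPositive (k : ℕ) : Convex ℝ {c : ℕ → ℝ | KPositive k c} :=
  fun _ hc _ hd _ _ ha hb hab n => Matrix.convex_setOf_posSemidef (hc n) (hd n) ha hb hab

theorem isClosed_setOf_kPositive (k : ℕ) : IsClosed {c : ℕ → ℝ | KPositive k c} := by
  simp only [KPositive, ofPred_forall]
  exact isClosed_iInter fun n =>
    Matrix.isClosed_setOf_posSemidef.preimage (f := (hankelBlock · k n))
      (continuous_pi fun _ => continuous_pi fun _ => continuous_apply _)

theorem KPositive.sq_le_mul {k : ℕ} {c : ℕ → ℝ} (h : KPositive k c) (hk : 1 ≤ k) (n : ℕ) :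
    c (n + 1) ^ 2 ≤ c n * c (n + 2) := by
  have := (h n).mul_apply_le_apply_mul_apply 0 ⟨1, by omega⟩
  simpa [hankelBlock, sq, add_assoc] using this

def scaleAbove (γ : ℕ → ℝ) (l : ℕ) (t : ℝ) : ℕ → ℝ :=
  fun m => if m ≤ l then γ m else t * γ m

theorem scaleAbove_of_le {γ : ℕ → ℝ} {l m : ℕ} (t : ℝ) (h : m ≤ l) :
    scaleAbove γ l t m = γ m :=
  if_pos h

theorem scaleAbove_of_lt {γ : ℕ → ℝ} {l m : ℕ} (t : ℝ) (h : l < m) :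
    scaleAbove γ l t m = t * γ m :=
  if_neg h.not_ge

theorem scaleAbove_one (γ : ℕ → ℝ) (l : ℕ) : scaleAbove γ l 1 = γ := by
  ext m
  simp [scaleAbove]

theorem scaleAbove_eq_lineMap (γ : ℕ → ℝ) (l : ℕ) (t : ℝ) :
    scaleAbove γ l t = AffineMap.lineMap (scaleAbove γ l 0) γ t := by
  ext m
  by_cases hm : m ≤ l <;> simp [scaleAbove, AffineMap.lineMap_apply, hm]

theorem setOf_kPositive_scaleAbove (k : ℕ) (γ : ℕ → ℝ) (l : ℕ) :
    {t | KPositive k (scaleAbove γ l t)} =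
      AffineMap.lineMap (scaleAbove γ l 0) γ ⁻¹' {c | KPositive k c} := by
  ext t
  rw [mem_ofPred_eq, scaleAbove_eq_lineMap γ l t]
  rfl

theorem KPositive.scaleAbove_mem_Icc {k l : ℕ} {γ : ℕ → ℝ} {t : ℝ} (hk : 1 ≤ k) (hl : 1 ≤ l)
    (hγ : ∀ n, 0 < γ n) (h : KPositive k (scaleAbove γ l t)) :
    t ∈ Icc (γ l ^ 2 / (γ (l - 1) * γ (l + 1))) (γ l * γ (l + 2) / γ (l + 1) ^ 2) := by
  have hlow := h.sq_le_mul hk (l - 1)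
  have hup := h.sq_le_mul hk l
  rw [Nat.sub_add_cancel hl, show l - 1 + 2 = l + 1 by omega,
    scaleAbove_of_le (m := l - 1) t (by omega), scaleAbove_of_le t le_rfl,
    scaleAbove_of_lt (m := l + 1) t (by omega)] at hlow
  rw [scaleAbove_of_le t le_rfl, scaleAbove_of_lt (m := l + 1) t (by omega),
    scaleAbove_of_lt (m := l + 2) t (by omega)] at hup
  have hlower : γ l ^ 2 / (γ (l - 1) * γ (l + 1)) ≤ t := by
    rw [div_le_iff₀ (mul_pos (hγ _) (hγ _))]
    linear_combination hlow
  have ht : 0 < t := (div_pos (pow_pos (hγ l) 2) (mul_pos (hγ _) (hγ _))).trans_le hlower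
  refine ⟨hlower, ?_⟩
  rw [le_div_iff₀ (pow_pos (hγ _) 2)]
  refine le_of_mul_le_mul_left ?_ ht
  linear_combination hup

theorem rank_one_perturbation_interval (γ : ℕ → ℝ) (k l : ℕ) (hk : 1 ≤ k) (hl : 1 ≤ l)
    (hγpos : ∀ n, 0 < γ n)
    (hpos : ∀ n : ℕ, (Matrix.of fun i j : Fin (k + 1) => γ (n + i + j)).PosSemidef) :
    let Ik : Set ℝ := {t : ℝ | 0 ≤ t ∧ ∀ n : ℕ,
      (Matrix.of fun i j : Fin (k + 1) =>
        if n + (i : ℕ) + j ≤ l then γ (n + i + j) else t * γ (n + i + j)).PosSemidef}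
    (1 : ℝ) ∈ Ik ∧ (∃ a b : ℝ, Ik = Set.Icc a b) ∧
      Ik ⊆ Set.Icc (γ l ^ 2 / (γ (l - 1) * γ (l + 1))) (γ l * γ (l + 2) / γ (l + 1) ^ 2) := by
  intro Ik
  -- the matrices in `Ik` are, by unfolding, the blocks `hankelBlock (scaleAbove γ l t) k n`
  have hIk : Ik = Ici 0 ∩ AffineMap.lineMap (scaleAbove γ l 0) γ ⁻¹' {c | KPositive k c} := by
    rw [← setOf_kPositive_scaleAbove]
    rfl
  have hone : (1 : ℝ) ∈ Ik := by
    refine ⟨zero_le_one, show KPositive k (scaleAbove γ l 1) from ?_⟩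
    rw [scaleAbove_one]
    exact hpos
  have hsub : Ik ⊆ Icc (γ l ^ 2 / (γ (l - 1) * γ (l + 1))) (γ l * γ (l + 2) / γ (l + 1) ^ 2) :=
    fun t ht => KPositive.scaleAbove_mem_Icc hk hl hγpos ht.2
  have hconvex : Convex ℝ Ik :=
    hIk ▸ (convex_Ici 0).inter ((convex_setOf_kPositive k).affine_preimage _)
  have hclosed : IsClosed Ik :=
    hIk ▸ isClosed_Ici.inter ((isClosed_setOf_kPositive k).preimage AffineMap.lineMap_continuous)
  have hcompact : IsCompact Ik :=
    Metric.isCompact_of_isClosed_isBounded hclosed ((Metric.isBounded_Icc _ _).subset hsub)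
  exact ⟨hone, ⟨_, _, eq_Icc_of_connected_compact ⟨⟨1, hone⟩, hconvex.isPreconnected⟩ hcompact⟩,
    hsub⟩
end

section
/- Let γ be the moment sequence of a k-hyponormal weighted shift (all (k+1)×(k+1) Hankel blocks positive semidefinite), let l ∈ ℕ, and consider the perturbation γ'(t) with γ'_n = γ_n for n ≤ l and γ'_n = tγ_n for n > l. If some block [M_γ]ⁿ_k with n ≤ l is singular with nonzero (1,1)-cofactor and γ satisfies det([M_{γ'(t)}]ⁿ_k) = γ_n·Cof(γ_n)·(1−t)·t^k where Cof(γ_n) is the (1,1) cofactor of [M_γ]ⁿ_k, then any t for which γ'(t) is k-positive satisfies t ≤ 1; hence 1 is not in the interior of the stability interval I^k. -/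
/-! If `γ'(t)` is `k`-positive, the block `[M_{γ'(t)}]ⁿ_k` is positive semidefinite, so its
determinant `γ n · Cof(γ n) · (1 - t) · t^(k+1)` is nonnegative. The cofactor is the determinant
of a leading principal block of the positive semidefinite `[M_γ]ⁿ⁺²_k`, hence nonnegative, and
being nonzero it is positive; as `γ n > 0` this forces `t ≤ 1`. So `I^k ⊆ (-∞, 1]`, whose
interior misses `1`. -/

open Set

theorem Matrix.PosSemidef.hankel_of_succ {R : Type*} [Ring R] [PartialOrder R] [StarRing R]
    {γ : ℕ → R} {n m : ℕ} (h : (Matrix.of fun i j : Fin (m + 1) => γ (n + i + j)).PosSemidef) :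
    (Matrix.of fun i j : Fin m => γ (n + i + j)).PosSemidef :=
  h.submatrix Fin.castSucc

theorem le_one_of_nonneg_mul_one_sub_mul_pow {c t : ℝ} (m : ℕ) (hc : 0 < c)
    (h : 0 ≤ c * (1 - t) * t ^ m) : t ≤ 1 := by
  by_contra! h1
  have : c * (1 - t) * t ^ m < 0 :=
    mul_neg_of_neg_of_pos (mul_neg_of_pos_of_neg hc (by linarith)) (pow_pos (by linarith) m)
  linarith

theorem notMem_interior_of_subset_Iic {α : Type*} [TopologicalSpace α] [LinearOrder α]
    [OrderTopology α] [DenselyOrdered α] [NoMaxOrder α] {s : Set α} {a : α} (hs : s ⊆ Iic a) :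
    a ∉ interior s := fun ha =>
  lt_irrefl a <| by simpa only [interior_Iic, mem_Iio] using interior_mono hs ha

theorem perturbation_degenerate_case_general (γ : ℕ → ℝ) (k l : ℕ)
    (hγpos : ∀ n, 0 < γ n)
    (hpos : ∀ n : ℕ, (Matrix.of fun i j : Fin (k + 2) => γ (n + i + j)).PosSemidef)
    (n : ℕ)
    (hcof : (Matrix.of fun i j : Fin (k + 1) => γ (n + 2 + i + j)).det ≠ 0)
    (hdet : ∀ t : ℝ,
      (Matrix.of fun i j : Fin (k + 2) =>
          if n + (i : ℕ) + j ≤ l then γ (n + i + j) else t * γ (n + i + j)).det =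
        γ n * (Matrix.of fun i j : Fin (k + 1) => γ (n + 2 + i + j)).det *
          (1 - t) * t ^ (k + 1)) :
    (∀ t : ℝ,
        t ∈ {t : ℝ | 0 ≤ t ∧ ∀ m : ℕ,
          (Matrix.of fun i j : Fin (k + 2) =>
            if m + (i : ℕ) + j ≤ l then γ (m + i + j)
            else t * γ (m + i + j)).PosSemidef} → t ≤ 1) ∧
      (1 : ℝ) ∉ interior {t : ℝ | 0 ≤ t ∧ ∀ m : ℕ,
          (Matrix.of fun i j : Fin (k + 2) =>
            if m + (i : ℕ) + j ≤ l then γ (m + i + j)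
            else t * γ (m + i + j)).PosSemidef} := by
  have hcof_pos : 0 < (Matrix.of fun i j : Fin (k + 1) => γ (n + 2 + i + j)).det :=
    (hpos (n + 2)).hankel_of_succ.det_nonneg.lt_of_ne' hcof
  have hle_one : ∀ t : ℝ,
      t ∈ {t : ℝ | 0 ≤ t ∧ ∀ m : ℕ,
        (Matrix.of fun i j : Fin (k + 2) =>
          if m + (i : ℕ) + j ≤ l then γ (m + i + j)
          else t * γ (m + i + j)).PosSemidef} → t ≤ 1 := by
    rintro t ⟨-, hpsd⟩
    exact le_one_of_nonneg_mul_one_sub_mul_pow (k + 1) (mul_pos (hγpos n) hcof_pos)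
      (hdet t ▸ (hpsd n).det_nonneg)
  exact ⟨hle_one, notMem_interior_of_subset_Iic hle_one⟩

theorem perturbation_degenerate_case (γ : ℕ → ℝ) (k l : ℕ)
    (hγpos : ∀ n, 0 < γ n)
    (hpos : ∀ n : ℕ, (Matrix.of fun i j : Fin (k + 2) => γ (n + i + j)).PosSemidef)
    (n : ℕ) (hn : n ≤ l)
    (hsing : (Matrix.of fun i j : Fin (k + 2) => γ (n + i + j)).det = 0)
    (hcof : (Matrix.of fun i j : Fin (k + 1) => γ (n + 2 + i + j)).det ≠ 0)
    (hdet : ∀ t : ℝ,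
      (Matrix.of fun i j : Fin (k + 2) =>
          if n + (i : ℕ) + j ≤ l then γ (n + i + j) else t * γ (n + i + j)).det =
        γ n * (Matrix.of fun i j : Fin (k + 1) => γ (n + 2 + i + j)).det *
          (1 - t) * t ^ (k + 1)) :
    (∀ t : ℝ,
        t ∈ {t : ℝ | 0 ≤ t ∧ ∀ m : ℕ,
          (Matrix.of fun i j : Fin (k + 2) =>
            if m + (i : ℕ) + j ≤ l then γ (m + i + j)
            else t * γ (m + i + j)).PosSemidef} → t ≤ 1) ∧
      (1 : ℝ) ∉ interior {t : ℝ | 0 ≤ t ∧ ∀ m : ℕ,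
          (Matrix.of fun i j : Fin (k + 2) =>
            if m + (i : ℕ) + j ≤ l then γ (m + i + j)
            else t * γ (m + i + j)).PosSemidef} :=
  perturbation_degenerate_case_general γ k l hγpos hpos n hcof hdet
end
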